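/- arXiv:math/0102142 — 5 statements merged into one kernel-verified Lean document; each statement's English description precedes it below -/
import Mathlib

section
/- Let T be a 3-form on an n-dimensional Euclidean vector space V with orthonormal basis e_1,…,e_n, and define σ^T(X,Y,Z,V) = g(T(X,Y),T(Z,V)) + g(T(Y,Z),T(X,V)) + g(T(Z,X),T(Y,V)), where T(X,Y) denotes the vector with g(T(X,Y),Z) = T(X,Y,Z). Then σ^T = (1/2) Σ_{i=1}^n (e_i ⌟ T) ∧ (e_i ⌟ T). -/
noncomputable section
open scoped BigOperators

/-- The standard basis vector `e_i` of `ℝⁿ`. -/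
def stdb (n : ℕ) (i : Fin n) : Fin n → ℝ := fun j => if i = j then 1 else 0

/-- For a 3-form `T` on an `n`-dimensional Euclidean space, with
`σ^T(X,Y,Z,V) = g(T(X,Y),T(Z,V)) + g(T(Y,Z),T(X,V)) + g(T(Z,X),T(Y,V))`
(where `g(T(X,Y),W) = T(X,Y,W)`), one has `σ^T = (1/2) Σᵢ (eᵢ ⌟ T) ∧ (eᵢ ⌟ T)`. -/
theorem stmt_2 (n : ℕ) (T : (Fin n → ℝ) → (Fin n → ℝ) → (Fin n → ℝ) → ℝ)
    (hadd : ∀ X X' Y Z, T (X + X') Y Z = T X Y Z + T X' Y Z)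
    (hsmul : ∀ (r : ℝ) X Y Z, T (r • X) Y Z = r * T X Y Z)
    (h12 : ∀ X Y Z, T X Y Z = - T Y X Z)
    (h23 : ∀ X Y Z, T X Y Z = - T X Z Y) :
    ∀ X Y Z V : Fin n → ℝ,
      (∑ a, T X Y (stdb n a) * T Z V (stdb n a))
        + (∑ a, T Y Z (stdb n a) * T X V (stdb n a))
        + (∑ a, T Z X (stdb n a) * T Y V (stdb n a))
      = (1 / 2) * ∑ i,
          (T (stdb n i) X Y * T (stdb n i) Z V
            - T (stdb n i) X Z * T (stdb n i) Y V
            + T (stdb n i) X V * T (stdb n i) Y Z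
            + T (stdb n i) X Y * T (stdb n i) Z V
            - T (stdb n i) X Z * T (stdb n i) Y V
            + T (stdb n i) X V * T (stdb n i) Y Z) := by
  intro X Y Z V
  have cyc : ∀ A B C, T A B C = T B C A := fun A B C => by
    rw [h12 A B C, h23 B A C]; ring
  have cyc2 : ∀ A B C, T A B C = T C A B := fun A B C => by
    rw [cyc, cyc]
  rw [← Finset.sum_add_distrib, ← Finset.sum_add_distrib, Finset.mul_sum]
  refine Finset.sum_congr rfl fun a _ => ?_
  rw [cyc2 X Y (stdb n a), cyc2 Z V (stdb n a), cyc2 Y Z (stdb n a),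
    cyc2 X V (stdb n a), cyc2 Z X (stdb n a), cyc2 Y V (stdb n a),
    h23 (stdb n a) Z X]
  ring
end
end

section
/- In the 5-dimensional spin representation Δ₅ ≅ ℂ⁴, the element η ∧ dη = 2(e₁∧e₂ + e₃∧e₄)∧e₅ acts by Clifford multiplication as a symmetric endomorphism with eigenvalues −4, 0, 0, 4. -/
noncomputable section
open scoped BigOperators ComplexInnerProductSpace

/-!
Write `A = 2 (P + Q)` with `P = e₁e₂e₅` and `Q = e₃e₄e₅`. Products of three distinct generators
are self-adjoint involutions, and `P`, `Q` commute since they share exactly one generator.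
Moreover `e₁` commutes with `P` and anticommutes with `Q`, while `e₃` anticommutes with `P` and
commutes with `Q`. Hence `e₃` and `e₁` swap the sign eigenspaces, which gives a common unit fixed
vector `e` of `P` and `Q`; then `e₁e₃e, e₃e, e₁e, e` are unit joint eigenvectors with sign pairs
`(-,-), (-,+), (+,-), (+,+)`, hence an orthonormal basis of the 4-dimensional `Δ`, on which `A`
acts by `-4, 0, 0, 4`.
-/

open Module

def IsCliffordFamily {K V ι : Type*} [Field K] [AddCommGroup V] [Module K V] [DecidableEq ι]
    (c : ι → V →ₗ[K] V) : Prop :=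
  ∀ i j ψ, c i (c j ψ) + c j (c i ψ) = if i = j then (-2 : K) • ψ else 0

/-- With `0`-based indices, `cliffordTriple c 0 1 4` is Clifford multiplication by `e₁e₂e₅`. -/
def cliffordTriple {K V ι : Type*} [Field K] [AddCommGroup V] [Module K V]
    (c : ι → V →ₗ[K] V) (a b d : ι) : V →ₗ[K] V :=
  c a ∘ₗ c b ∘ₗ c d

namespace IsCliffordFamily

variable {K V ι : Type*} [Field K] [AddCommGroup V] [Module K V] [DecidableEq ι]
  {c : ι → V →ₗ[K] V}

theorem sq [CharZero K] (hc : IsCliffordFamily c) (i : ι) (x : V) : c i (c i x) = -x := by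
  have h := hc i i x
  rw [if_pos rfl, ← two_smul K, neg_smul] at h
  exact smul_right_injective V two_ne_zero (h.trans (smul_neg _ _).symm)

theorem anticomm (hc : IsCliffordFamily c) {i j : ι} (h : i ≠ j) (x : V) :
    c i (c j x) = -c j (c i x) :=
  eq_neg_of_add_eq_zero_left ((hc i j x).trans (if_neg h))

variable {a b d : ι}

theorem triple_triple [CharZero K] (hc : IsCliffordFamily c) (h : [a, b, d].Nodup) (x : V) :
    cliffordTriple c a b d (cliffordTriple c a b d x) = x := by
  obtain ⟨⟨hab, had⟩, hbd⟩ : (a ≠ b ∧ a ≠ d) ∧ b ≠ d := by simpa using h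
  simp only [cliffordTriple, LinearMap.comp_apply, hc.anticomm hab.symm, hc.anticomm had.symm,
    hc.anticomm hbd.symm, hc.sq, map_neg, neg_neg]

theorem triple_comm_of_mem [CharZero K] (hc : IsCliffordFamily c) (h : [a, b, d].Nodup)
    {g : ι} (hg : g ∈ [a, b, d]) (x : V) :
    cliffordTriple c a b d (c g x) = c g (cliffordTriple c a b d x) := by
  obtain ⟨⟨hab, had⟩, hbd⟩ : (a ≠ b ∧ a ≠ d) ∧ b ≠ d := by simpa using h
  simp only [List.mem_cons, List.not_mem_nil, or_false] at hg
  rcases hg with rfl | rfl | rfl <;>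
  simp only [cliffordTriple, LinearMap.comp_apply, hc.anticomm hab.symm, hc.anticomm had.symm,
    hc.anticomm hbd.symm, hc.sq, map_neg, neg_neg]

theorem triple_anticomm_of_not_mem (hc : IsCliffordFamily c) {g : ι} (hg : g ∉ [a, b, d])
    (x : V) : cliffordTriple c a b d (c g x) = -c g (cliffordTriple c a b d x) := by
  obtain ⟨hga, hgb, hgd⟩ : g ≠ a ∧ g ≠ b ∧ g ≠ d := by simpa using hg
  simp only [cliffordTriple, LinearMap.comp_apply, hc.anticomm hgd.symm, hc.anticomm hgb.symm,
    hc.anticomm hga.symm, map_neg, neg_neg]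

theorem triple_comm_triple [CharZero K] (hc : IsCliffordFamily c) (h : [a, b, d].Nodup)
    {a' b' d' : ι} (ha' : a' ∉ [a, b, d]) (hb' : b' ∉ [a, b, d]) (hd' : d' ∈ [a, b, d]) (x : V) :
    cliffordTriple c a b d (cliffordTriple c a' b' d' x) =
      cliffordTriple c a' b' d' (cliffordTriple c a b d x) := by
  change cliffordTriple c a b d (c a' (c b' (c d' x))) =
    c a' (c b' (c d' (cliffordTriple c a b d x)))
  rw [hc.triple_anticomm_of_not_mem ha', hc.triple_anticomm_of_not_mem hb',
    hc.triple_comm_of_mem h hd', map_neg, neg_neg]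

end IsCliffordFamily

section InnerProduct

variable {𝕜 E ι : Type*} [RCLike 𝕜] [NormedAddCommGroup E] [InnerProductSpace 𝕜 E]
  [DecidableEq ι] {c : ι → E →ₗ[𝕜] E}

theorem IsCliffordFamily.norm_map (hc : IsCliffordFamily c)
    (hsk : ∀ i (ψ φ : E), inner 𝕜 (c i ψ) φ = -inner 𝕜 ψ (c i φ)) (i : ι) (x : E) :
    ‖c i x‖ = ‖x‖ := by
  have h : inner 𝕜 (c i x) (c i x) = inner 𝕜 x x := by
    rw [hsk, hc.sq, inner_neg_right, neg_neg]
  rw [inner_self_eq_norm_sq_to_K, inner_self_eq_norm_sq_to_K] at h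
  exact (sq_eq_sq₀ (norm_nonneg _) (norm_nonneg _)).1 (by exact_mod_cast h)

theorem IsCliffordFamily.isSymmetric_triple (hc : IsCliffordFamily c)
    (hsk : ∀ i (ψ φ : E), inner 𝕜 (c i ψ) φ = -inner 𝕜 ψ (c i φ)) {a b d : ι}
    (h : [a, b, d].Nodup) : (cliffordTriple c a b d).IsSymmetric := by
  obtain ⟨⟨hab, had⟩, hbd⟩ : (a ≠ b ∧ a ≠ d) ∧ b ≠ d := by simpa using h
  intro x y
  simp only [cliffordTriple, LinearMap.comp_apply, hsk, hc.anticomm hab.symm,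
    hc.anticomm had.symm, hc.anticomm hbd.symm, map_neg, inner_neg_right, neg_neg]

end InnerProduct

theorem Submodule.exists_mem_ne_zero_fixed_of_anticomm {R M : Type*} [Ring R] [AddCommGroup M]
    [Module R M] {P Y : M →ₗ[R] M} {p : Submodule R M} (hp : p ≠ ⊥)
    (hpP : ∀ x ∈ p, P x ∈ p) (hpY : ∀ x ∈ p, Y x ∈ p) (hP : ∀ x, P (P x) = x)
    (hYP : ∀ x, P (Y x) = -Y (P x)) (hY : Function.Injective Y) :
    ∃ w ∈ p, w ≠ 0 ∧ P w = w := by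
  obtain ⟨v, hv, hv0⟩ := Submodule.exists_mem_ne_zero_of_ne_bot hp
  by_cases h : v + P v = 0
  · refine ⟨Y v, hpY v hv, fun h0 => hv0 ((injective_iff_map_eq_zero Y).1 hY v h0), ?_⟩
    rw [hYP, eq_neg_of_add_eq_zero_right h, map_neg, neg_neg]
  · exact ⟨v + P v, p.add_mem hv (hpP v hv), h, by rw [map_add, hP, add_comm]⟩

theorem exists_ne_zero_common_fixed_of_anticomm {R M : Type*} [Ring R] [AddCommGroup M] [Module R M]
    [Nontrivial M] {P Q X Y : M →ₗ[R] M} (hPP : ∀ x, P (P x) = x) (hQQ : ∀ x, Q (Q x) = x)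
    (hPQ : ∀ x, P (Q x) = Q (P x)) (hXP : ∀ x, P (X x) = X (P x))
    (hXQ : ∀ x, Q (X x) = -X (Q x)) (hYP : ∀ x, P (Y x) = -Y (P x))
    (hX : Function.Injective X) (hY : Function.Injective Y) :
    ∃ w, w ≠ 0 ∧ P w = w ∧ Q w = w := by
  have hfix : ∀ {x}, x ∈ P.eqLocus LinearMap.id ↔ P x = x := Iff.rfl
  obtain ⟨v, -, hv0, hPv⟩ := Submodule.exists_mem_ne_zero_fixed_of_anticomm (p := ⊤)
    top_ne_bot (fun _ _ => trivial) (fun _ _ => trivial) hPP hYP hY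
  have hp : P.eqLocus LinearMap.id ≠ ⊥ :=
    (Submodule.ne_bot_iff _).2 ⟨v, hfix.2 hPv, hv0⟩
  obtain ⟨w, hw, hw0, hQw⟩ := Submodule.exists_mem_ne_zero_fixed_of_anticomm hp
    (fun x hx => hfix.2 (by rw [hPQ, hfix.1 hx])) (fun x hx => hfix.2 (by rw [hXP, hfix.1 hx]))
    hQQ hXQ hX
  exact ⟨w, hw0, hfix.1 hw, hQw⟩

section JointEigenbasis

variable {𝕜 E : Type*} [RCLike 𝕜] [NormedAddCommGroup E] [InnerProductSpace 𝕜 E]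
  {P Q : E →ₗ[𝕜] E}

theorem orthonormal_of_joint_eigenvectors {ι : Type*} {v : ι → E} {s t : ι → ℤ}
    (hP : P.IsSymmetric) (hQ : Q.IsSymmetric) (hPv : ∀ m, P (v m) = (s m : 𝕜) • v m)
    (hQv : ∀ m, Q (v m) = (t m : 𝕜) • v m) (hst : Function.Injective fun m => (s m, t m))
    (hv : ∀ m, ‖v m‖ = 1) : Orthonormal 𝕜 v := by
  refine ⟨hv, fun m n hmn => ?_⟩
  by_cases hs : s m = s n
  · have ht : (t m : 𝕜) ≠ t n := fun ht => hmn (hst (Prod.ext hs (Int.cast_injective ht)))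
    exact hQ.orthogonalFamily_eigenspaces ht ⟨v m, Module.End.mem_eigenspace_iff.2 (hQv m)⟩
      ⟨v n, Module.End.mem_eigenspace_iff.2 (hQv n)⟩
  · exact hP.orthogonalFamily_eigenspaces (fun h => hs (Int.cast_injective h))
      ⟨v m, Module.End.mem_eigenspace_iff.2 (hPv m)⟩ ⟨v n, Module.End.mem_eigenspace_iff.2 (hPv n)⟩

theorem exists_orthonormalBasis_joint_eigen {X Y : E →ₗ[𝕜] E} (hdim : finrank 𝕜 E = 4)
    (hP : P.IsSymmetric) (hQ : Q.IsSymmetric) (hPP : ∀ x, P (P x) = x) (hQQ : ∀ x, Q (Q x) = x)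
    (hPQ : ∀ x, P (Q x) = Q (P x)) (hXP : ∀ x, P (X x) = X (P x))
    (hXQ : ∀ x, Q (X x) = -X (Q x)) (hYP : ∀ x, P (Y x) = -Y (P x))
    (hYQ : ∀ x, Q (Y x) = Y (Q x)) (hX : ∀ x, ‖X x‖ = ‖x‖) (hY : ∀ x, ‖Y x‖ = ‖x‖) :
    ∃ b : OrthonormalBasis (Fin 4) 𝕜 E, ∀ m,
      P (b m) = ((![-1, -1, 1, 1] : Fin 4 → ℤ) m : 𝕜) • b m ∧
      Q (b m) = ((![-1, 1, -1, 1] : Fin 4 → ℤ) m : 𝕜) • b m := by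
  have hinj : ∀ {T : E →ₗ[𝕜] E}, (∀ x, ‖T x‖ = ‖x‖) → Function.Injective T := fun hT =>
    (injective_iff_map_eq_zero _).2 fun x hx => by rw [← norm_eq_zero, ← hT, hx, norm_zero]
  have : Nontrivial E := Module.nontrivial_of_finrank_eq_succ hdim
  obtain ⟨w, hw0, hPw, hQw⟩ :=
    exists_ne_zero_common_fixed_of_anticomm hPP hQQ hPQ hXP hXQ hYP (hinj hX) (hinj hY)
  set e := (‖w‖ : 𝕜)⁻¹ • w
  have hPe : P e = e := by rw [map_smul, hPw]
  have hQe : Q e = e := by rw [map_smul, hQw]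
  set v : Fin 4 → E := ![X (Y e), Y e, X e, e]
  have hPv : ∀ m, P (v m) = ((![-1, -1, 1, 1] : Fin 4 → ℤ) m : 𝕜) • v m := by
    intro m; fin_cases m <;> simp [v, hXP, hYP, hPe]
  have hQv : ∀ m, Q (v m) = ((![-1, 1, -1, 1] : Fin 4 → ℤ) m : 𝕜) • v m := by
    intro m; fin_cases m <;> simp [v, hXQ, hYQ, hQe]
  have he : ‖e‖ = 1 := norm_smul_inv_norm hw0
  have hv : ∀ m, ‖v m‖ = 1 := by
    intro m; fin_cases m <;> simp [v, hX, hY, he]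
  have hon := orthonormal_of_joint_eigenvectors hP hQ hPv hQv (by decide) hv
  let b := basisOfOrthonormalOfCardEqFinrank hon (by simp [hdim])
  have hb : ⇑b = v := coe_basisOfOrthonormalOfCardEqFinrank hon _
  refine ⟨b.toOrthonormalBasis (hb ▸ hon), fun m => ?_⟩
  rw [Basis.coe_toOrthonormalBasis, hb]
  exact ⟨hPv m, hQv m⟩

end JointEigenbasis

/-- In the 5-dimensional spin representation `Δ₅ ≅ ℂ⁴`, the element
`η ∧ dη = 2(e₁∧e₂ + e₃∧e₄)∧e₅` acts by Clifford multiplication (i.e. as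
`2·e₁·e₂·e₅ + 2·e₃·e₄·e₅`) as a symmetric endomorphism with eigenvalues
`−4, 0, 0, 4`. -/
theorem stmt_9 {Δ : Type*} [NormedAddCommGroup Δ] [InnerProductSpace ℂ Δ]
    (hdim : Module.finrank ℂ Δ = 4)
    (c : Fin 5 → Δ →ₗ[ℂ] Δ)
    (hcl : ∀ i j ψ, c i (c j ψ) + c j (c i ψ) = if i = j then (-2 : ℂ) • ψ else 0)
    (hsk : ∀ i (ψ φ : Δ), ⟪c i ψ, φ⟫ = - ⟪ψ, c i φ⟫)
    (A : Δ → Δ)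
    (hA : ∀ ψ, A ψ = (2 : ℂ) • c 0 (c 1 (c 4 ψ)) + (2 : ℂ) • c 2 (c 3 (c 4 ψ))) :
    (∀ ψ φ : Δ, ⟪A ψ, φ⟫ = ⟪ψ, A φ⟫)
    ∧ ∃ b : OrthonormalBasis (Fin 4) ℂ Δ,
        ∀ m, A (b m) = (((![-4, 0, 0, 4] : Fin 4 → ℝ) m : ℝ) : ℂ) • b m := by
  have hc : IsCliffordFamily c := hcl
  have h014 : [(0 : Fin 5), 1, 4].Nodup := by decide
  have h234 : [(2 : Fin 5), 3, 4].Nodup := by decide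
  have hP := hc.isSymmetric_triple hsk h014
  have hQ := hc.isSymmetric_triple hsk h234
  have hA' : A = ⇑((2 : ℂ) • (cliffordTriple c 0 1 4 + cliffordTriple c 2 3 4)) :=
    funext fun ψ => by simp [hA, cliffordTriple]
  refine ⟨hA' ▸ (hP.add hQ).smul (map_ofNat _ 2), ?_⟩
  obtain ⟨b, hb⟩ := exists_orthonormalBasis_joint_eigen hdim hP hQ (hc.triple_triple h014)
    (hc.triple_triple h234) (hc.triple_comm_triple h014 (by decide) (by decide) (by decide))
    (hc.triple_comm_of_mem h014 (by decide)) (hc.triple_anticomm_of_not_mem (by decide))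
    (hc.triple_anticomm_of_not_mem (by decide)) (hc.triple_comm_of_mem h234 (by decide))
    (hc.norm_map hsk 0) (hc.norm_map hsk 2)
  refine ⟨b, fun m => ?_⟩
  obtain ⟨hPb, hQb⟩ := hb m
  rw [hA', LinearMap.smul_apply, LinearMap.add_apply, hPb, hQb, ← add_smul, smul_smul]
  fin_cases m <;> norm_num
end
end

section
/- In the 5-dimensional spin representation, let Ψ be a highest weight spinor satisfying e₁·e₂·Ψ = i·Ψ, e₃·e₄·Ψ = i·Ψ (e.g. Ψ = (1,0,0,0) in a standard basis of ℂ⁴). Then Ψ lies in the kernel of the operator Σ_{i<j<k} t_{ijk} e_i·e_j·e_k + Σ_i x_i e_i if and only if x₁ = −t₂₃₄, x₂ = t₁₃₄, x₃ = −t₁₂₄, x₄ = t₁₂₃, x₅ = 0, t₁₂₅ = −t₃₄₅, t₂₃₅ = −t₁₄₅, t₂₄₅ = t₁₃₅. -/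
noncomputable section
open scoped BigOperators ComplexInnerProductSpace

set_option maxRecDepth 8000 in
private lemma orth_aux {Δ : Type*} [NormedAddCommGroup Δ] [InnerProductSpace ℂ Δ]
    (S : Δ → Δ) (u v : Δ) (hS : ∀ a b : Δ, ⟪S a, b⟫ = -⟪a, S b⟫)
    (hu : S u = Complex.I • u) (hv : S v = (-Complex.I) • v) : ⟪u, v⟫ = 0 := by
  have h := hS u v
  rw [hu, hv, inner_smul_left, inner_smul_right] at h
  simp [Complex.conj_I] at h
  have h2 : (2 * Complex.I) * ⟪u, v⟫ = 0 := by linear_combination -h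
  rcases mul_eq_zero.1 h2 with h3 | h3
  · simp [Complex.I_ne_zero] at h3
  · exact h3

set_option maxRecDepth 16000

/-- In the 5-dimensional spin representation, let `Ψ` be a highest
weight spinor with `e₁·e₂·Ψ = i Ψ`, `e₃·e₄·Ψ = i Ψ` (and `e₅·Ψ = i Ψ`, as for the
spinor `(1,0,0,0)`).  Then `Ψ` lies in the kernel of
`Σ_{i<j<k} t_{ijk} eᵢ·eⱼ·e_k + Σᵢ xᵢ eᵢ` iff `x₁ = −t₂₃₄`, `x₂ = t₁₃₄`,
`x₃ = −t₁₂₄`, `x₄ = t₁₂₃`, `x₅ = 0`, `t₁₂₅ = −t₃₄₅`, `t₂₃₅ = −t₁₄₅`,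
`t₂₄₅ = t₁₃₅` (0-indexed below). -/
theorem stmt_10 {Δ : Type*} [NormedAddCommGroup Δ] [InnerProductSpace ℂ Δ]
    (hdim : Module.finrank ℂ Δ = 4)
    (c : Fin 5 → Δ →ₗ[ℂ] Δ)
    (hcl : ∀ i j ψ, c i (c j ψ) + c j (c i ψ) = if i = j then (-2 : ℂ) • ψ else 0)
    (hsk : ∀ i (ψ φ : Δ), ⟪c i ψ, φ⟫ = - ⟪ψ, c i φ⟫)
    (Ψ : Δ) (hne : Ψ ≠ 0)
    (h01 : c 0 (c 1 Ψ) = Complex.I • Ψ)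
    (h23 : c 2 (c 3 Ψ) = Complex.I • Ψ)
    (h4 : c 4 Ψ = Complex.I • Ψ)
    (t : Fin 5 → Fin 5 → Fin 5 → ℝ) (x : Fin 5 → ℝ) :
    ((∑ i, ∑ j, ∑ k, if i < j ∧ j < k then ((t i j k : ℝ) : ℂ) • c i (c j (c k Ψ)) else 0)
        + ∑ i, ((x i : ℝ) : ℂ) • c i Ψ = 0)
      ↔ (x 0 = - t 1 2 3 ∧ x 1 = t 0 2 3 ∧ x 2 = - t 0 1 3 ∧ x 3 = t 0 1 2 ∧ x 4 = 0
          ∧ t 0 1 4 = - t 2 3 4 ∧ t 1 2 4 = - t 0 3 4 ∧ t 1 3 4 = t 0 2 4) := by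
  classical
  have sq : ∀ i (ψ : Δ), c i (c i ψ) = -ψ := by
    intro i ψ
    have h := hcl i i ψ
    rw [if_pos rfl] at h
    have h' : (2 : ℂ) • c i (c i ψ) = (2 : ℂ) • (-ψ) := by
      rw [two_smul, h]; module
    have h2 := congrArg (fun z => ((2:ℂ)⁻¹) • z) h'
    simpa [smul_smul] using h2
  have ac : ∀ i j, i ≠ j → ∀ (ψ : Δ), c i (c j ψ) = - c j (c i ψ) := by
    intro i j hij ψ
    have h := hcl i j ψ
    rw [if_neg hij] at h
    exact eq_neg_of_add_eq_zero_left h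
  -- action table on Ψ, c 0 Ψ, c 2 Ψ, c 0 (c 2 Ψ)
  have s1 : c 1 Ψ = (-Complex.I) • c 0 Ψ := by
    have h := congrArg (c 0) h01
    rw [sq 0, map_smul] at h
    rw [neg_smul, ← h, neg_neg]
  have s3 : c 3 Ψ = (-Complex.I) • c 2 Ψ := by
    have h := congrArg (c 2) h23
    rw [sq 2, map_smul] at h
    rw [neg_smul, ← h, neg_neg]
  have a10 : c 1 (c 0 Ψ) = (-Complex.I) • Ψ := by
    rw [ac 1 0 (by decide), h01]; module
  have a20 : c 2 (c 0 Ψ) = -(c 0 (c 2 Ψ)) := ac 2 0 (by decide) Ψ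
  have a30 : c 3 (c 0 Ψ) = Complex.I • (c 0 (c 2 Ψ)) := by
    rw [ac 3 0 (by decide), s3, map_smul]; module
  have a40 : c 4 (c 0 Ψ) = (-Complex.I) • (c 0 Ψ) := by
    rw [ac 4 0 (by decide), h4, map_smul]; module
  have b12 : c 1 (c 2 Ψ) = (-Complex.I) • (c 0 (c 2 Ψ)) := by
    rw [ac 1 2 (by decide), s1, map_smul, a20]; module
  have b32 : c 3 (c 2 Ψ) = (-Complex.I) • Ψ := by
    rw [ac 3 2 (by decide), h23]; module
  have b42 : c 4 (c 2 Ψ) = (-Complex.I) • (c 2 Ψ) := by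
    rw [ac 4 2 (by decide), h4, map_smul]; module
  have d1 : c 1 (c 0 (c 2 Ψ)) = (-Complex.I) • (c 2 Ψ) := by
    rw [ac 1 0 (by decide), b12, map_smul, sq 0]; module
  have d2 : c 2 (c 0 (c 2 Ψ)) = c 0 Ψ := by
    rw [ac 2 0 (by decide), sq 2, map_neg, neg_neg]
  have d3 : c 3 (c 0 (c 2 Ψ)) = Complex.I • (c 0 Ψ) := by
    rw [ac 3 0 (by decide), b32, map_smul]; module
  have d4 : c 4 (c 0 (c 2 Ψ)) = Complex.I • (c 0 (c 2 Ψ)) := by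
    rw [ac 4 0 (by decide), b42, map_smul]; module
  -- the key normal form of the operator applied to Ψ
  have key : ((∑ i, ∑ j, ∑ k, if i < j ∧ j < k then ((t i j k : ℝ) : ℂ) • c i (c j (c k Ψ)) else 0)
        + ∑ i, ((x i : ℝ) : ℂ) • c i Ψ)
      = (-((t 0 1 4 : ℝ) : ℂ) - ((t 2 3 4 : ℝ) : ℂ) + ((x 4 : ℝ) : ℂ) * Complex.I) • Ψ
        + (((t 0 2 3 : ℝ) : ℂ) * Complex.I + ((t 1 2 3 : ℝ) : ℂ) + ((x 0 : ℝ) : ℂ)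
            - ((x 1 : ℝ) : ℂ) * Complex.I) • (c 0 Ψ)
        + (((t 0 1 2 : ℝ) : ℂ) * Complex.I + ((t 0 1 3 : ℝ) : ℂ) + ((x 2 : ℝ) : ℂ)
            - ((x 3 : ℝ) : ℂ) * Complex.I) • (c 2 Ψ)
        + (((t 0 2 4 : ℝ) : ℂ) * Complex.I + ((t 0 3 4 : ℝ) : ℂ) + ((t 1 2 4 : ℝ) : ℂ)
            - ((t 1 3 4 : ℝ) : ℂ) * Complex.I) • (c 0 (c 2 Ψ)) := by
    simp only [Fin.sum_univ_five]
    simp only [Fin.isValue, show ((0:Fin 5)<1)=True by decide, show ((0:Fin 5)<2)=True by decide,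
      show ((0:Fin 5)<3)=True by decide, show ((0:Fin 5)<4)=True by decide,
      show ((1:Fin 5)<2)=True by decide, show ((1:Fin 5)<3)=True by decide,
      show ((1:Fin 5)<4)=True by decide, show ((2:Fin 5)<3)=True by decide,
      show ((2:Fin 5)<4)=True by decide, show ((3:Fin 5)<4)=True by decide,
      show ¬((1:Fin 5)<0) by decide, show ¬((2:Fin 5)<0) by decide,
      show ¬((3:Fin 5)<0) by decide, show ¬((4:Fin 5)<0) by decide,
      show ¬((2:Fin 5)<1) by decide, show ¬((3:Fin 5)<1) by decide,
      show ¬((4:Fin 5)<1) by decide, show ¬((3:Fin 5)<2) by decide,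
      show ¬((4:Fin 5)<2) by decide, show ¬((4:Fin 5)<3) by decide,
      show ¬((0:Fin 5)<0) by decide, show ¬((1:Fin 5)<1) by decide,
      show ¬((2:Fin 5)<2) by decide, show ¬((3:Fin 5)<3) by decide,
      show ¬((4:Fin 5)<4) by decide, true_and, and_true, and_false, false_and,
      if_true, if_false, ite_false, ite_true, not_false_eq_true]
    simp only [map_smul, map_neg, sq, s1, s3, h4, a10, a20, a30, a40, b12, b32, b42,
      d1, d2, d3, d4, smul_neg, neg_neg]
    match_scalars <;> (ring_nf; simp only [show (Complex.I^3 = -Complex.I) from by rw [pow_succ, Complex.I_sq]; ring, Complex.I_sq]; ring_nf)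
  -- skew-adjointness of c 0 ∘ c 1
  have hskT : ∀ u v : Δ, ⟪c 0 (c 1 u), v⟫ = -⟪u, c 0 (c 1 v)⟫ := by
    intro u v
    rw [hsk 0, hsk 1, ac 1 0 (by decide), inner_neg_right, neg_neg]
  -- eigenvectors of c 0 ∘ c 1
  have TA : c 0 (c 1 (c 0 Ψ)) = (-Complex.I) • (c 0 Ψ) := by
    rw [a10, map_smul]
  have TB : c 0 (c 1 (c 2 Ψ)) = Complex.I • (c 2 Ψ) := by
    rw [b12, map_smul, sq 0]; module
  have TD : c 0 (c 1 (c 0 (c 2 Ψ))) = (-Complex.I) • (c 0 (c 2 Ψ)) := by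
    rw [d1, map_smul]
  -- orthogonality
  have oPA : ⟪Ψ, c 0 Ψ⟫ = 0 := orth_aux (fun ψ => c 4 ψ) Ψ (c 0 Ψ) (hsk 4) h4 a40
  have oPB : ⟪Ψ, c 2 Ψ⟫ = 0 := orth_aux (fun ψ => c 4 ψ) Ψ (c 2 Ψ) (hsk 4) h4 b42
  have oDA : ⟪c 0 (c 2 Ψ), c 0 Ψ⟫ = 0 :=
    orth_aux (fun ψ => c 4 ψ) _ _ (hsk 4) d4 a40
  have oDB : ⟪c 0 (c 2 Ψ), c 2 Ψ⟫ = 0 :=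
    orth_aux (fun ψ => c 4 ψ) _ _ (hsk 4) d4 b42
  have oPD : ⟪Ψ, c 0 (c 2 Ψ)⟫ = 0 :=
    orth_aux (fun ψ => c 0 (c 1 ψ)) _ _ hskT h01 TD
  have oBA : ⟪c 2 Ψ, c 0 Ψ⟫ = 0 :=
    orth_aux (fun ψ => c 0 (c 1 ψ)) _ _ hskT TB TA
  have oAP : ⟪c 0 Ψ, Ψ⟫ = 0 := inner_eq_zero_symm.mp oPA
  have oBP : ⟪c 2 Ψ, Ψ⟫ = 0 := inner_eq_zero_symm.mp oPB
  have oAD : ⟪c 0 Ψ, c 0 (c 2 Ψ)⟫ = 0 := inner_eq_zero_symm.mp oDA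
  have oBD : ⟪c 2 Ψ, c 0 (c 2 Ψ)⟫ = 0 := inner_eq_zero_symm.mp oDB
  have oDP : ⟪c 0 (c 2 Ψ), Ψ⟫ = 0 := inner_eq_zero_symm.mp oPD
  have oAB : ⟪c 0 Ψ, c 2 Ψ⟫ = 0 := inner_eq_zero_symm.mp oBA
  -- norms
  have nP : ⟪Ψ, Ψ⟫ ≠ 0 := inner_self_ne_zero.mpr hne
  have nA : ⟪c 0 Ψ, c 0 Ψ⟫ = ⟪Ψ, Ψ⟫ := by
    rw [hsk 0, sq 0, inner_neg_right, neg_neg]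
  have nB : ⟪c 2 Ψ, c 2 Ψ⟫ = ⟪Ψ, Ψ⟫ := by
    rw [hsk 2, sq 2, inner_neg_right, neg_neg]
  have nD : ⟪c 0 (c 2 Ψ), c 0 (c 2 Ψ)⟫ = ⟪Ψ, Ψ⟫ := by
    rw [hsk 0, sq 0, inner_neg_right, neg_neg, nB]
  rw [key]
  constructor
  · intro h
    have eP := congrArg (fun z => (⟪Ψ, z⟫ : ℂ)) h
    have eA := congrArg (fun z => (⟪c 0 Ψ, z⟫ : ℂ)) h
    have eB := congrArg (fun z => (⟪c 2 Ψ, z⟫ : ℂ)) h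
    have eD := congrArg (fun z => (⟪c 0 (c 2 Ψ), z⟫ : ℂ)) h
    simp only [inner_add_right, inner_smul_right, inner_zero_right,
      oPA, oPB, oPD, oAP, oAB, oAD, oBP, oBA, oBD, oDP, oDA, oDB,
      nA, nB, nD, mul_zero, add_zero, zero_add] at eP eA eB eD
    have zP : (-((t 0 1 4 : ℝ) : ℂ) - ((t 2 3 4 : ℝ) : ℂ) + ((x 4 : ℝ) : ℂ) * Complex.I) = 0 :=
      by rcases mul_eq_zero.1 eP with h' | h'; exact h'; exact absurd h' nP
    have zA : (((t 0 2 3 : ℝ) : ℂ) * Complex.I + ((t 1 2 3 : ℝ) : ℂ) + ((x 0 : ℝ) : ℂ)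
        - ((x 1 : ℝ) : ℂ) * Complex.I) = 0 :=
      by rcases mul_eq_zero.1 eA with h' | h'; exact h'; exact absurd h' nP
    have zB : (((t 0 1 2 : ℝ) : ℂ) * Complex.I + ((t 0 1 3 : ℝ) : ℂ) + ((x 2 : ℝ) : ℂ)
        - ((x 3 : ℝ) : ℂ) * Complex.I) = 0 :=
      by rcases mul_eq_zero.1 eB with h' | h'; exact h'; exact absurd h' nP
    have zD : (((t 0 2 4 : ℝ) : ℂ) * Complex.I + ((t 0 3 4 : ℝ) : ℂ) + ((t 1 2 4 : ℝ) : ℂ)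
        - ((t 1 3 4 : ℝ) : ℂ) * Complex.I) = 0 :=
      by rcases mul_eq_zero.1 eD with h' | h'; exact h'; exact absurd h' nP
    rw [Complex.ext_iff] at zP zA zB zD
    simp only [Complex.add_re, Complex.add_im, Complex.sub_re, Complex.sub_im,
      Complex.neg_re, Complex.neg_im, Complex.mul_re, Complex.mul_im,
      Complex.ofReal_re, Complex.ofReal_im, Complex.I_re, Complex.I_im,
      Complex.zero_re, Complex.zero_im, mul_zero, mul_one, zero_mul, sub_zero,
      zero_sub, add_zero, zero_add, neg_zero] at zP zA zB zD
    obtain ⟨zP1, zP2⟩ := zP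
    obtain ⟨zA1, zA2⟩ := zA
    obtain ⟨zB1, zB2⟩ := zB
    obtain ⟨zD1, zD2⟩ := zD
    refine ⟨by linarith, by linarith, by linarith, by linarith, by linarith,
      by linarith, by linarith, by linarith⟩
  · rintro ⟨hx0, hx1, hx2, hx3, hx4, h014, h124, h134⟩
    have zP : (-((t 0 1 4 : ℝ) : ℂ) - ((t 2 3 4 : ℝ) : ℂ) + ((x 4 : ℝ) : ℂ) * Complex.I) = 0 := by
      rw [h014, hx4]; push_cast; ring
    have zA : (((t 0 2 3 : ℝ) : ℂ) * Complex.I + ((t 1 2 3 : ℝ) : ℂ) + ((x 0 : ℝ) : ℂ)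
        - ((x 1 : ℝ) : ℂ) * Complex.I) = 0 := by
      rw [hx0, hx1]; push_cast; ring
    have zB : (((t 0 1 2 : ℝ) : ℂ) * Complex.I + ((t 0 1 3 : ℝ) : ℂ) + ((x 2 : ℝ) : ℂ)
        - ((x 3 : ℝ) : ℂ) * Complex.I) = 0 := by
      rw [hx2, hx3]; push_cast; ring
    have zD : (((t 0 2 4 : ℝ) : ℂ) * Complex.I + ((t 0 3 4 : ℝ) : ℂ) + ((t 1 2 4 : ℝ) : ℂ)
        - ((t 1 3 4 : ℝ) : ℂ) * Complex.I) = 0 := by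
      rw [h124, h134]; push_cast; ring
    rw [zP, zA, zB, zD]
    simp
end
end

section
/- Let T = −(e₅∧e₆∧e₇ − e₁∧e₃∧e₅ + e₃∧e₄∧e₇ + e₁∧e₄∧e₆) and σ^T = (1/2) Σ_i (e_i⌟T)∧(e_i⌟T). Then σ^T = 2(e₃∧e₄∧e₅∧e₆ − e₁∧e₄∧e₅∧e₇ − e₁∧e₃∧e₆∧e₇), and the 4-form (1/4)dT + (1/2)σ^T with dT = −4 e₁∧e₃∧e₆∧e₇ acts in the 7-dimensional spin representation as a symmetric endomorphism with eigenvalues (2, −4, 2, 0, 2, 0, 2, −4). -/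
noncomputable section
open scoped BigOperators RealInnerProductSpace

/-- Kronecker delta on `Fin 7`. -/
def kd (a b : Fin 7) : ℝ := if a = b then 1 else 0

/-- Components of the 3-form `e_a ∧ e_b ∧ e_c` on `ℝ⁷`. -/
def trip (a b c : Fin 7) : Fin 7 → Fin 7 → Fin 7 → ℝ := fun i j k =>
  Matrix.det !![kd a i, kd a j, kd a k; kd b i, kd b j, kd b k; kd c i, kd c j, kd c k]

/-- Components of the 4-form `e_a ∧ e_b ∧ e_c ∧ e_d` on `ℝ⁷`. -/
def quad (a b c d : Fin 7) : Fin 7 → Fin 7 → Fin 7 → Fin 7 → ℝ := fun i j k l =>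
  Matrix.det !![kd a i, kd a j, kd a k, kd a l;
                kd b i, kd b j, kd b k, kd b l;
                kd c i, kd c j, kd c k, kd c l;
                kd d i, kd d j, kd d k, kd d l]

/-- The standard G₂ 3-form
`ω³ = e₁₂₇ + e₁₃₅ − e₁₄₆ − e₂₃₆ − e₂₄₅ + e₃₄₇ + e₅₆₇` (components, 0-indexed). -/
def w3 : Fin 7 → Fin 7 → Fin 7 → ℝ := fun i j k =>
  trip 0 1 6 i j k + trip 0 2 4 i j k - trip 0 3 5 i j k - trip 1 2 5 i j k
    - trip 1 3 4 i j k + trip 2 3 6 i j k + trip 4 5 6 i j k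

/-- Levi-Civita symbol on seven indices. -/
def eps (f : Fin 7 → Fin 7) : ℝ :=
  ∏ p : Fin 7 × Fin 7,
    if p.1 < p.2 then ((Int.sign ((f p.2 : ℤ) - (f p.1 : ℤ)) : ℤ) : ℝ) else 1

/-- Hodge star of a 3-form on oriented Euclidean `ℝ⁷` (components). -/
def star3 (T : Fin 7 → Fin 7 → Fin 7 → ℝ) : Fin 7 → Fin 7 → Fin 7 → Fin 7 → ℝ :=
  fun j₁ j₂ j₃ j₄ =>
    (1 / 6) * ∑ i₁, ∑ i₂, ∑ i₃, T i₁ i₂ i₃ * eps ![i₁, i₂, i₃, j₁, j₂, j₃, j₄]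

/-- Hodge star of a 4-form on oriented Euclidean `ℝ⁷` (components). -/
def star4 (A : Fin 7 → Fin 7 → Fin 7 → Fin 7 → ℝ) : Fin 7 → Fin 7 → Fin 7 → ℝ :=
  fun j₁ j₂ j₃ =>
    (1 / 24) * ∑ i₁, ∑ i₂, ∑ i₃, ∑ i₄, A i₁ i₂ i₃ i₄ * eps ![i₁, i₂, i₃, i₄, j₁, j₂, j₃]

/-- Hodge star of a 5-form on oriented Euclidean `ℝ⁷` (components). -/
def star5 (A : Fin 7 → Fin 7 → Fin 7 → Fin 7 → Fin 7 → ℝ) : Fin 7 → Fin 7 → ℝ :=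
  fun j₁ j₂ =>
    (1 / 120) * ∑ i₁, ∑ i₂, ∑ i₃, ∑ i₄, ∑ i₅,
      A i₁ i₂ i₃ i₄ i₅ * eps ![i₁, i₂, i₃, i₄, i₅, j₁, j₂]

/-- Inner product of 2-forms for which the `e_i ∧ e_j` (i<j) are orthonormal. -/
def ip2 (α β : Fin 7 → Fin 7 → ℝ) : ℝ := (1 / 2) * ∑ a, ∑ b, α a b * β a b

/-- Wedge product of two 1-forms (components). -/
def wedge11 (α β : Fin 7 → ℝ) : Fin 7 → Fin 7 → ℝ := fun a b => α a * β b - α b * β a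

/-- Wedge product of a 1-form with a 3-form (components). -/
def wedge13 (α : Fin 7 → ℝ) (ω : Fin 7 → Fin 7 → Fin 7 → ℝ) :
    Fin 7 → Fin 7 → Fin 7 → Fin 7 → ℝ := fun a b c d =>
  α a * ω b c d - α b * ω a c d + α c * ω a b d - α d * ω a b c

/-- Wedge product of two 2-forms (components). -/
def wedge22 (α β : Fin 7 → Fin 7 → ℝ) : Fin 7 → Fin 7 → Fin 7 → Fin 7 → ℝ :=
  fun a b c d =>
    α a b * β c d - α a c * β b d + α a d * β b c
      + β a b * α c d - β a c * α b d + β a d * α b c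

/-- Wedge product of a 3-form with a 2-form (components). -/
def wedge32 (ω : Fin 7 → Fin 7 → Fin 7 → ℝ) (α : Fin 7 → Fin 7 → ℝ) :
    Fin 7 → Fin 7 → Fin 7 → Fin 7 → Fin 7 → ℝ := fun a b c d e =>
  ω a b c * α d e - ω a b d * α c e + ω a b e * α c d + ω a c d * α b e
    - ω a c e * α b d + ω a d e * α b c - ω b c d * α a e + ω b c e * α a d
    - ω b d e * α a c + ω c d e * α a b

/-- Interior product of a vector with a 4-form (components). -/
def contr1 (X : Fin 7 → ℝ) (A : Fin 7 → Fin 7 → Fin 7 → Fin 7 → ℝ) :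
    Fin 7 → Fin 7 → Fin 7 → ℝ := fun a b c => ∑ i, X i * A i a b c

/-- Interior product of a vector with a 3-form (components). -/
def contr13 (X : Fin 7 → ℝ) (T : Fin 7 → Fin 7 → Fin 7 → ℝ) : Fin 7 → Fin 7 → ℝ :=
  fun a b => ∑ i, X i * T i a b

/-- The orthogonal projection of a 2-form onto `Λ²₇ = {X ⌟ ω³}`:
`pr_m(α) = (1/3) Σᵢ (α, eᵢ ⌟ ω³) (eᵢ ⌟ ω³)`. -/
def prm (α : Fin 7 → Fin 7 → ℝ) : Fin 7 → Fin 7 → ℝ := fun a b =>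
  (1 / 3) * ∑ i, ip2 α (fun x y => w3 i x y) * w3 i a b

/-!
The formula for `σ^T` is a finite computation with Kronecker deltas, checked over `ℤ` by
`decide`. Let `P` and `Q` be the Clifford actions of `e₃₄₅₆` and `e₁₄₅₇`. By that formula the
4-form `(1/4) dT + (1/2) σ^T` equals `e₃₄₅₆ − e₁₄₅₇ − 2 e₁₃₆₇`, and `e₁₃₆₇` acts as `−PQ`, so
the form acts as `P − Q + 2PQ`. Now `P` and `Q` are commuting symmetric involutions, so the
spinors split into the four joint eigenspaces `E(±1, ±1)`, on which the operator is
`2, 0, −4, 2`. The generators `e₁, e₃, e₄` commute or anticommute with `P` and `Q` in the three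
nontrivial sign patterns, so they map `E(1, 1)` isometrically onto the other three. Hence every
joint eigenspace has dimension `2`, and an orthonormal pair in `E(1, 1)` together with its images
under `e₁, e₃, e₄` is the eigenbasis.
-/

open Module (finrank)

theorem trip_eq (a b d i j k : Fin 7) : trip a b d i j k =
    kd a i * (kd b j * kd d k - kd b k * kd d j) - kd b i * (kd a j * kd d k - kd a k * kd d j)
      + kd d i * (kd a j * kd b k - kd a k * kd b j) := by
  rw [trip, Matrix.det_fin_three]
  simp only [Matrix.of_apply, Matrix.cons_val', Matrix.cons_val_zero, Matrix.cons_val_fin_one,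
    Matrix.cons_val_one, Matrix.cons_val]
  ring

theorem quad_eq (a b d e i j k l : Fin 7) : quad a b d e i j k l =
    kd a i * trip b d e j k l - kd b i * trip a d e j k l
      + kd d i * trip a b e j k l - kd e i * trip a b d j k l := by
  rw [quad, Matrix.det_succ_column_zero, Fin.sum_univ_four, trip, trip, trip, trip]
  simp only [Matrix.det_fin_three, Matrix.submatrix_apply, Matrix.of_apply, Matrix.cons_val',
    Matrix.cons_val, Matrix.cons_val_fin_one, Fin.succAbove, Fin.isValue, Fin.reduceSucc,
    Fin.reduceCastSucc, Fin.reduceLT, ↓reduceIte, Fin.val_zero, Fin.val_one, Fin.val_two]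
  norm_num
  ring

def kdInt (a b : Fin 7) : ℤ := if a = b then 1 else 0

def tripInt (a b d i j k : Fin 7) : ℤ :=
  kdInt a i * (kdInt b j * kdInt d k - kdInt b k * kdInt d j)
    - kdInt b i * (kdInt a j * kdInt d k - kdInt a k * kdInt d j)
    + kdInt d i * (kdInt a j * kdInt b k - kdInt a k * kdInt b j)

def quadInt (a b d e i j k l : Fin 7) : ℤ :=
  kdInt a i * tripInt b d e j k l - kdInt b i * tripInt a d e j k l
    + kdInt d i * tripInt a b e j k l - kdInt e i * tripInt a b d j k l

def torsionInt (i j k : Fin 7) : ℤ :=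
  -(tripInt 4 5 6 i j k - tripInt 0 2 4 i j k + tripInt 2 3 6 i j k + tripInt 0 3 5 i j k)

theorem kd_eq_cast (a b : Fin 7) : kd a b = kdInt a b := by
  rw [kd, kdInt]
  split_ifs <;> simp

theorem trip_eq_cast (a b d i j k : Fin 7) : trip a b d i j k = tripInt a b d i j k := by
  simp [trip_eq, tripInt, kd_eq_cast]

theorem quad_eq_cast (a b d e i j k l : Fin 7) :
    quad a b d e i j k l = quadInt a b d e i j k l := by
  simp [quad_eq, quadInt, trip_eq_cast, kd_eq_cast]

set_option maxHeartbeats 4000000 in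
theorem sum_torsionInt_mul_torsionInt : ∀ a b d e : Fin 7,
    ∑ i, (torsionInt i a b * torsionInt i d e - torsionInt i a d * torsionInt i b e
        + torsionInt i a e * torsionInt i b d)
      = 2 * (quadInt 2 3 4 5 a b d e - quadInt 0 3 4 6 a b d e - quadInt 0 2 5 6 a b d e) := by
  decide

def torsion : Fin 7 → Fin 7 → Fin 7 → ℝ := fun i j k =>
  -(trip 4 5 6 i j k - trip 0 2 4 i j k + trip 2 3 6 i j k + trip 0 3 5 i j k)

theorem half_sum_wedge22_torsion (a b d e : Fin 7) :
    (1 / 2) * ∑ i, wedge22 (torsion i) (torsion i) a b d e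
      = 2 * (quad 2 3 4 5 a b d e - quad 0 3 4 6 a b d e - quad 0 2 5 6 a b d e) := by
  have hT : ∀ i j k, torsion i j k = torsionInt i j k := fun i j k => by
    simp [torsion, torsionInt, trip_eq_cast]
  calc (1 / 2) * ∑ i, wedge22 (torsion i) (torsion i) a b d e
      = ∑ i, (torsion i a b * torsion i d e - torsion i a d * torsion i b e
          + torsion i a e * torsion i b d) := by
        rw [Finset.mul_sum]
        exact Finset.sum_congr rfl fun i _ => by rw [wedge22]; ring
    _ = _ := by
        simp only [hT, quad_eq_cast]
        exact_mod_cast sum_torsionInt_mul_torsionInt a b d e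

section Collapse

variable {M : Type*} [AddCommGroup M] [Module ℝ M]

theorem sum_kd_smul (x : Fin 7) (g : Fin 7 → M) : ∑ i, kd x i • g i = g x := by
  simp [kd, ite_smul]

theorem sum_quad_smul (a b d e : Fin 7) (F : Fin 7 → Fin 7 → Fin 7 → Fin 7 → M) :
    ∑ i, ∑ j, ∑ k, ∑ l, quad a b d e i j k l • F i j k l
      = F a b d e - F a b e d - F a d b e + F a d e b + F a e b d - F a e d b
        - F b a d e + F b a e d + F b d a e - F b d e a - F b e a d + F b e d a
        + F d a b e - F d a e b - F d b a e + F d b e a + F d e a b - F d e b a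
        - F e a b d + F e a d b + F e b a d - F e b d a - F e d a b + F e d b a := by
  simp only [quad_eq, trip_eq, sub_smul, add_smul, mul_smul, Finset.sum_add_distrib,
    Finset.sum_sub_distrib, sum_kd_smul, ← Finset.smul_sum]
  abel

end Collapse

section Clifford

variable {ι V : Type*} [AddCommGroup V] [Module ℝ V]

def IsCliffordAction [DecidableEq ι] (c : ι → Module.End ℝ V) : Prop :=
  ∀ i j ψ, c i (c j ψ) + c j (c i ψ) = if i = j then (-2 : ℝ) • ψ else 0

namespace IsCliffordAction

variable [DecidableEq ι] {c : ι → Module.End ℝ V}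

theorem apply_apply_self (hc : IsCliffordAction c) (i : ι) (ψ : V) : c i (c i ψ) = -ψ := by
  have h := hc i i ψ
  rw [if_pos rfl, ← two_smul ℝ, neg_smul, ← smul_neg] at h
  exact smul_right_injective V two_ne_zero h

theorem apply_swap (hc : IsCliffordAction c) {i j : ι} (hij : i ≠ j) (ψ : V) :
    c j (c i ψ) = -c i (c j ψ) := by
  have h := hc i j ψ
  rw [if_neg hij] at h
  exact eq_neg_of_add_eq_zero_right h

theorem apply_swap_of_lt [LinearOrder ι] (hc : IsCliffordAction c) {i j : ι} (hij : i < j)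
    (ψ : V) : c j (c i ψ) = -c i (c j ψ) :=
  hc.apply_swap hij.ne ψ

theorem sum_quad_smul_apply {c : Fin 7 → Module.End ℝ V} (hc : IsCliffordAction c) {a b d e : Fin 7}
    (hab : a < b) (hbd : b < d) (hde : d < e) (ψ : V) :
    ∑ i, ∑ j, ∑ k, ∑ l, quad a b d e i j k l • c i (c j (c k (c l ψ)))
      = (24 : ℝ) • (c a * c b * c d * c e) ψ := by
  rw [sum_quad_smul]
  simp (disch := first | order | fail) only [Module.End.mul_apply, hc.apply_swap_of_lt, map_neg,
    neg_neg]
  module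

theorem involutive_mul_mul_mul [LinearOrder ι] (hc : IsCliffordAction c) {a b d e : ι}
    (hab : a < b) (hbd : b < d) (hde : d < e) : Function.Involutive (c a * c b * c d * c e) :=
  fun x => by
  simp (disch := first | order | fail) only [Module.End.mul_apply, hc.apply_swap_of_lt,
    hc.apply_apply_self, map_neg, neg_neg]

end IsCliffordAction

end Clifford

section CliffordInner

variable {ι V : Type*} [NormedAddCommGroup V] [InnerProductSpace ℝ V]

namespace IsCliffordAction

variable [DecidableEq ι] {c : ι → Module.End ℝ V}

theorem inner_apply_apply (hc : IsCliffordAction c) (hsk : ∀ i ψ φ, ⟪c i ψ, φ⟫ = -⟪ψ, c i φ⟫)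
    (i : ι) (x y : V) : ⟪c i x, c i y⟫ = ⟪x, y⟫ := by
  rw [hsk, hc.apply_apply_self, inner_neg_right, neg_neg]

theorem isSymmetric_mul_mul_mul [LinearOrder ι] (hc : IsCliffordAction c)
    (hsk : ∀ i ψ φ, ⟪c i ψ, φ⟫ = -⟪ψ, c i φ⟫) {a b d e : ι} (hab : a < b) (hbd : b < d)
    (hde : d < e) : LinearMap.IsSymmetric (c a * c b * c d * c e) := fun x y => by
  simp (disch := first | order | fail) only [Module.End.mul_apply, hsk, hc.apply_swap_of_lt,
    map_neg, neg_neg]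

end IsCliffordAction

end CliffordInner

section FinrankSup

variable {K V : Type*} [DivisionRing K] [AddCommGroup V] [Module K V] [FiniteDimensional K V]

theorem Submodule.finrank_iSup_le_sum {ι : Type*} [Fintype ι] (p : ι → Submodule K V) :
    finrank K (⨆ i, p i : Submodule K V) ≤ ∑ i, finrank K (p i) := by
  classical
  rw [← Finset.sup_univ_eq_iSup]
  induction (Finset.univ : Finset ι) using Finset.induction_on with
  | empty => simp
  | insert i s _ ih =>
    rw [Finset.sup_insert, Finset.sum_insert ‹_›]
    exact (Submodule.finrank_add_le_finrank_add_finrank _ _).trans (Nat.add_le_add_left ih _)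

end FinrankSup

section JointEigenspaces

theorem Module.End.apply_mem_eigenspace_of_apply_apply {R M : Type*} [CommRing R] [AddCommGroup M]
    [Module R M] {f g : Module.End R M} {s μ : R} (hfg : ∀ x, f (g x) = s • g (f x)) {x : M}
    (hx : x ∈ f.eigenspace μ) : g x ∈ f.eigenspace (s * μ) := by
  rw [Module.End.mem_eigenspace_iff] at hx ⊢
  rw [hfg, hx, map_smul, smul_smul]

def signP : Fin 4 → ℝ := ![1, 1, -1, -1]

def signQ : Fin 4 → ℝ := ![1, -1, 1, -1]

theorem signP_mul_self (k : Fin 4) : signP k * signP k = 1 := by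
  fin_cases k <;> norm_num [signP]

theorem signQ_mul_self (k : Fin 4) : signQ k * signQ k = 1 := by
  fin_cases k <;> norm_num [signQ]

theorem signP_ne_or_signQ_ne {k l : Fin 4} (h : k ≠ l) : signP k ≠ signP l ∨ signQ k ≠ signQ l := by
  fin_cases k <;> fin_cases l <;> simp_all [signP, signQ] <;> norm_num

variable {V : Type*} [AddCommGroup V] [Module ℝ V] {P Q : Module.End ℝ V}

theorem smul_add_mem_eigenspace_inf (hP : Function.Involutive P) (hQ : Function.Involutive Q)
    (hPQ : ∀ x, P (Q x) = Q (P x)) {p q : ℝ} (hp : p * p = 1) (hq : q * q = 1) (w : V) :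
    (4⁻¹ : ℝ) • (w + p • P w + q • Q w + (p * q) • P (Q w)) ∈ P.eigenspace p ⊓ Q.eigenspace q := by
  constructor <;> rw [SetLike.mem_coe, Module.End.mem_eigenspace_iff]
  · simp only [map_add, map_smul, hP _]
    linear_combination (norm := module) hp • (-(4⁻¹ : ℝ) • (P w + q • P (Q w)))
  · simp only [map_add, map_smul, ← hPQ, hQ _]
    linear_combination (norm := module) hq • (-(4⁻¹ : ℝ) • (Q w + p • P (Q w)))

theorem iSup_eigenspace_inf_eq_top (hP : Function.Involutive P) (hQ : Function.Involutive Q)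
    (hPQ : ∀ x, P (Q x) = Q (P x)) :
    ⨆ k, P.eigenspace (signP k) ⊓ Q.eigenspace (signQ k) = ⊤ := by
  refine Submodule.eq_top_iff'.mpr fun w => ?_
  have hw : w = ∑ k, (4⁻¹ : ℝ) •
      (w + signP k • P w + signQ k • Q w + (signP k * signQ k) • P (Q w)) := by
    simp only [Fin.sum_univ_four, signP, signQ, Matrix.cons_val, Fin.isValue]
    module
  rw [hw]
  exact Submodule.sum_mem_iSup fun k =>
    smul_add_mem_eigenspace_inf hP hQ hPQ (signP_mul_self k) (signQ_mul_self k) w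

theorem apply_mem_eigenspace_inf {g : Module.End ℝ V} {s t p q : ℝ}
    (hPg : ∀ x, P (g x) = s • g (P x)) (hQg : ∀ x, Q (g x) = t • g (Q x)) {x : V}
    (hx : x ∈ P.eigenspace p ⊓ Q.eigenspace q) :
    g x ∈ P.eigenspace (s * p) ⊓ Q.eigenspace (t * q) :=
  ⟨Module.End.apply_mem_eigenspace_of_apply_apply hPg hx.1,
    Module.End.apply_mem_eigenspace_of_apply_apply hQg hx.2⟩

theorem finrank_le_four_mul_finrank_eigenspace_inf [FiniteDimensional ℝ V]
    (hP : Function.Involutive P) (hQ : Function.Involutive Q) (hPQ : ∀ x, P (Q x) = Q (P x))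
    (g : Fin 4 → Module.End ℝ V) (hg : ∀ k, Function.Injective (g k))
    (hPg : ∀ k x, P (g k x) = signP k • g k (P x)) (hQg : ∀ k x, Q (g k x) = signQ k • g k (Q x)) :
    finrank ℝ V ≤ 4 * finrank ℝ (P.eigenspace 1 ⊓ Q.eigenspace 1 : Submodule ℝ V) := by
  have hle : ∀ k, finrank ℝ (P.eigenspace (signP k) ⊓ Q.eigenspace (signQ k) : Submodule ℝ V)
      ≤ finrank ℝ (P.eigenspace 1 ⊓ Q.eigenspace 1 : Submodule ℝ V) := fun k => by
    rw [(Submodule.equivMapOfInjective (g k) (hg k) _).finrank_eq]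
    refine Submodule.finrank_mono ?_
    rintro _ ⟨x, hx, rfl⟩
    simpa only [signP_mul_self, signQ_mul_self] using apply_mem_eigenspace_inf (hPg k) (hQg k) hx
  calc finrank ℝ V = finrank ℝ (⊤ : Submodule ℝ V) := (finrank_top ℝ V).symm
    _ = finrank ℝ (⨆ k, P.eigenspace (signP k) ⊓ Q.eigenspace (signQ k) : Submodule ℝ V) := by
      rw [iSup_eigenspace_inf_eq_top hP hQ hPQ]
    _ ≤ ∑ k, finrank ℝ (P.eigenspace (signP k) ⊓ Q.eigenspace (signQ k) : Submodule ℝ V) :=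
      Submodule.finrank_iSup_le_sum _
    _ ≤ ∑ _k : Fin 4, finrank ℝ (P.eigenspace 1 ⊓ Q.eigenspace 1 : Submodule ℝ V) :=
      Finset.sum_le_sum fun k _ => hle k
    _ = _ := by simp

end JointEigenspaces

section Orthonormal

variable {V : Type*} [NormedAddCommGroup V] [InnerProductSpace ℝ V]

theorem Submodule.exists_orthonormal_fin {E : Submodule ℝ V} [FiniteDimensional ℝ E] {n : ℕ}
    (hn : n ≤ finrank ℝ E) : ∃ u : Fin n → V, Orthonormal ℝ u ∧ ∀ a, u a ∈ E :=
  let b := stdOrthonormalBasis ℝ E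
  ⟨fun a => b (Fin.castLE hn a),
    (b.orthonormal.comp _ (Fin.castLE_injective hn)).comp_linearIsometry E.subtypeₗᵢ,
    fun _ => (b _).2⟩

theorem LinearMap.IsSymmetric.inner_eq_zero_of_mem_eigenspace {T : Module.End ℝ V}
    (hT : T.IsSymmetric) {μ ν : ℝ} (hμν : μ ≠ ν) {x y : V} (hx : x ∈ T.eigenspace μ)
    (hy : y ∈ T.eigenspace ν) :
    ⟪x, y⟫ = 0 :=
  hT.orthogonalFamily_eigenspaces hμν ⟨x, hx⟩ ⟨y, hy⟩

variable {P Q : Module.End ℝ V}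

theorem orthonormal_apply_of_mem_eigenspace_inf (hPs : LinearMap.IsSymmetric P)
    (hQs : LinearMap.IsSymmetric Q) (g : Fin 4 → Module.End ℝ V)
    (hg : ∀ k x y, ⟪g k x, g k y⟫ = ⟪x, y⟫)
    {ι : Type*} {u : ι → V} (hu : Orthonormal ℝ u)
    (hmem : ∀ k a, g k (u a) ∈ P.eigenspace (signP k) ⊓ Q.eigenspace (signQ k)) :
    Orthonormal ℝ fun ka : Fin 4 × ι => g ka.1 (u ka.2) := by
  classical
  rw [orthonormal_iff_ite] at hu ⊢
  rintro ⟨k, a⟩ ⟨l, b⟩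
  by_cases hkl : k = l
  · subst hkl
    simp only [hg, hu, Prod.mk.injEq, true_and]
  · rw [if_neg fun h => hkl (Prod.ext_iff.mp h).1]
    rcases signP_ne_or_signQ_ne hkl with h | h
    · exact LinearMap.IsSymmetric.inner_eq_zero_of_mem_eigenspace hPs h (hmem k a).1 (hmem l b).1
    · exact LinearMap.IsSymmetric.inner_eq_zero_of_mem_eigenspace hQs h (hmem k a).2 (hmem l b).2

theorem exists_orthonormal_mem_eigenspace_inf (hdim : finrank ℝ V = 8)
    (hPs : LinearMap.IsSymmetric P) (hQs : LinearMap.IsSymmetric Q)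
    (hP : Function.Involutive P) (hQ : Function.Involutive Q) (hPQ : ∀ x, P (Q x) = Q (P x))
    (g : Fin 4 → Module.End ℝ V) (hg : ∀ k x y, ⟪g k x, g k y⟫ = ⟪x, y⟫)
    (hPg : ∀ k x, P (g k x) = signP k • g k (P x)) (hQg : ∀ k x, Q (g k x) = signQ k • g k (Q x)) :
    ∃ v : Fin 4 × Fin 2 → V, Orthonormal ℝ v ∧
      ∀ ka, v ka ∈ P.eigenspace (signP ka.1) ⊓ Q.eigenspace (signQ ka.1) := by
  have : FiniteDimensional ℝ V := .of_finrank_pos (by omega)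
  have hinj : ∀ k, Function.Injective (g k) := fun k =>
    (injective_iff_map_eq_zero (g k)).mpr fun x hx =>
      inner_self_eq_zero.mp (by rw [← hg, hx, inner_zero_left])
  have h2 : 2 ≤ finrank ℝ (P.eigenspace 1 ⊓ Q.eigenspace 1 : Submodule ℝ V) := by
    have := finrank_le_four_mul_finrank_eigenspace_inf hP hQ hPQ g hinj hPg hQg
    omega
  obtain ⟨u, hu, hu1⟩ := Submodule.exists_orthonormal_fin h2
  have hmem : ∀ k a, g k (u a) ∈ P.eigenspace (signP k) ⊓ Q.eigenspace (signQ k) := fun k a => by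
    simpa only [mul_one] using apply_mem_eigenspace_inf (hPg k) (hQg k) (hu1 a)
  exact ⟨fun ka => g ka.1 (u ka.2), orthonormal_apply_of_mem_eigenspace_inf hPs hQs g hg hu hmem,
    fun ka => hmem ka.1 ka.2⟩

end Orthonormal

section Spin

variable {V : Type*} [NormedAddCommGroup V] [InnerProductSpace ℝ V] {c : Fin 7 → Module.End ℝ V}

/-- The Clifford action of `e₃ ∧ e₄ ∧ e₅ ∧ e₆`, with `e₁, …, e₇` acting as `c 0, …, c 6`. -/
def cliffordE3456 (c : Fin 7 → Module.End ℝ V) : Module.End ℝ V := c 2 * c 3 * c 4 * c 5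

def cliffordE1457 (c : Fin 7 → Module.End ℝ V) : Module.End ℝ V := c 0 * c 3 * c 4 * c 6

def spinOperator (c : Fin 7 → Module.End ℝ V) : Module.End ℝ V :=
  cliffordE3456 c - cliffordE1457 c + (2 : ℝ) • (cliffordE3456 c * cliffordE1457 c)

namespace IsCliffordAction

variable (hc : IsCliffordAction c)
include hc

theorem involutive_cliffordE3456 : Function.Involutive (cliffordE3456 c) :=
  hc.involutive_mul_mul_mul (by decide) (by decide) (by decide)

theorem involutive_cliffordE1457 : Function.Involutive (cliffordE1457 c) :=
  hc.involutive_mul_mul_mul (by decide) (by decide) (by decide)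

theorem isSymmetric_cliffordE3456 (hsk : ∀ i ψ φ, ⟪c i ψ, φ⟫ = -⟪ψ, c i φ⟫) :
    LinearMap.IsSymmetric (cliffordE3456 c) :=
  hc.isSymmetric_mul_mul_mul hsk (by decide) (by decide) (by decide)

theorem isSymmetric_cliffordE1457 (hsk : ∀ i ψ φ, ⟪c i ψ, φ⟫ = -⟪ψ, c i φ⟫) :
    LinearMap.IsSymmetric (cliffordE1457 c) :=
  hc.isSymmetric_mul_mul_mul hsk (by decide) (by decide) (by decide)

theorem cliffordE3456_cliffordE1457_comm (x : V) :
    cliffordE3456 c (cliffordE1457 c x) = cliffordE1457 c (cliffordE3456 c x) := by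
  simp (disch := decide) only [cliffordE3456, cliffordE1457, Module.End.mul_apply,
    hc.apply_swap_of_lt, hc.apply_apply_self, map_neg, neg_neg]

theorem smul_sum_smul_apply_eq_spinOperator (Q : Fin 7 → Fin 7 → Fin 7 → Fin 7 → ℝ)
    (hQ : ∀ i j k l, Q i j k l
      = quad 2 3 4 5 i j k l - quad 0 3 4 6 i j k l - 2 * quad 0 2 5 6 i j k l) (ψ : V) :
    (1 / 24 : ℝ) • ∑ i, ∑ j, ∑ k, ∑ l, Q i j k l • c i (c j (c k (c l ψ)))
      = spinOperator c ψ := by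
  simp only [hQ, sub_smul, mul_smul, Finset.sum_sub_distrib, ← Finset.smul_sum]
  rw [hc.sum_quad_smul_apply (by decide) (by decide) (by decide),
    hc.sum_quad_smul_apply (by decide) (by decide) (by decide),
    hc.sum_quad_smul_apply (by decide) (by decide) (by decide)]
  simp (disch := decide) only [spinOperator, cliffordE3456, cliffordE1457, LinearMap.add_apply,
    LinearMap.sub_apply, LinearMap.smul_apply, Module.End.mul_apply, hc.apply_swap_of_lt,
    hc.apply_apply_self, map_neg, neg_neg]
  module

theorem isSymmetric_spinOperator (hsk : ∀ i ψ φ, ⟪c i ψ, φ⟫ = -⟪ψ, c i φ⟫) :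
    LinearMap.IsSymmetric (spinOperator c) := fun x y => by
  simp only [spinOperator, LinearMap.add_apply, LinearMap.sub_apply, LinearMap.smul_apply,
    Module.End.mul_apply, inner_add_left, inner_sub_left, inner_add_right, inner_sub_right,
    real_inner_smul_left, real_inner_smul_right, hc.isSymmetric_cliffordE3456 hsk _ _,
    hc.isSymmetric_cliffordE1457 hsk _ _, ← hc.cliffordE3456_cliffordE1457_comm]

theorem exists_orthonormalBasis_spinOperator_apply_eq (hsk : ∀ i ψ φ, ⟪c i ψ, φ⟫ = -⟪ψ, c i φ⟫)
    (hdim : finrank ℝ V = 8) :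
    ∃ b : OrthonormalBasis (Fin 8) ℝ V,
      ∀ m, spinOperator c (b m) = (![2, -4, 2, 0, 2, 0, 2, -4] : Fin 8 → ℝ) m • b m := by
  set g : Fin 4 → Module.End ℝ V := ![1, c 0, c 2, c 3]
  have hg : ∀ k x y, ⟪g k x, g k y⟫ = ⟪x, y⟫ := fun k x y => by
    fin_cases k <;> simp [g, hc.inner_apply_apply hsk]
  have hPg : ∀ k x, cliffordE3456 c (g k x) = signP k • g k (cliffordE3456 c x) := fun k x => by
    fin_cases k <;> simp (disch := decide) [g, cliffordE3456, signP, hc.apply_swap_of_lt,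
      hc.apply_apply_self]
  have hQg : ∀ k x, cliffordE1457 c (g k x) = signQ k • g k (cliffordE1457 c x) := fun k x => by
    fin_cases k <;> simp (disch := decide) [g, cliffordE1457, signQ, hc.apply_swap_of_lt,
      hc.apply_apply_self]
  obtain ⟨v, hv, hmem⟩ := exists_orthonormal_mem_eigenspace_inf hdim
    (hc.isSymmetric_cliffordE3456 hsk) (hc.isSymmetric_cliffordE1457 hsk)
    hc.involutive_cliffordE3456 hc.involutive_cliffordE1457 hc.cliffordE3456_cliffordE1457_comm
    g hg hPg hQg
  -- `(e m).1` picks the joint eigenspace of the `m`-th basis vector so that the eigenvalues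
  -- come out in the prescribed order
  let e : Fin 8 → Fin 4 × Fin 2 := fun m =>
    (![0, 2, 3, 1, 0, 1, 3, 2] m, ![0, 0, 0, 0, 1, 1, 1, 1] m)
  have hve := hv.comp e (by decide)
  have hspan : ⊤ ≤ Submodule.span ℝ (Set.range (v ∘ e)) := by
    rw [hve.linearIndependent.span_eq_top_of_card_eq_finrank (by simp [hdim])]
  refine ⟨OrthonormalBasis.mk hve hspan, fun m => ?_⟩
  obtain ⟨hP, hQ⟩ := hmem (e m)
  rw [SetLike.mem_coe, Module.End.mem_eigenspace_iff] at hP hQ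
  rw [OrthonormalBasis.coe_mk, Function.comp_apply, spinOperator, LinearMap.add_apply,
    LinearMap.sub_apply, LinearMap.smul_apply, Module.End.mul_apply, hQ, map_smul, hP,
    smul_smul, smul_smul, ← sub_smul, ← add_smul]
  congr 1
  fin_cases m <;> simp [e, signP, signQ] <;> norm_num

end IsCliffordAction

end Spin

/-- For `T = −(e₅₆₇ − e₁₃₅ + e₃₄₇ + e₁₄₆)` on `ℝ⁷`, with
`σ^T = (1/2)Σᵢ (eᵢ⌟T)∧(eᵢ⌟T)` and `dT = −4 e₁₃₆₇`, one has
`σ^T = 2(e₃₄₅₆ − e₁₄₅₇ − e₁₃₆₇)`, and the 4-form `(1/4)dT + (1/2)σ^T` acts in the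
8-dimensional real spin representation of `Cl(ℝ⁷)` as a symmetric endomorphism with
eigenvalues `(2, −4, 2, 0, 2, 0, 2, −4)`. -/
theorem stmt_12 {Δ : Type*} [NormedAddCommGroup Δ] [InnerProductSpace ℝ Δ]
    (hdim : Module.finrank ℝ Δ = 8)
    (c : Fin 7 → Δ →ₗ[ℝ] Δ)
    (hcl : ∀ i j ψ, c i (c j ψ) + c j (c i ψ) = if i = j then (-2 : ℝ) • ψ else 0)
    (hsk : ∀ i (ψ φ : Δ), ⟪c i ψ, φ⟫ = - ⟪ψ, c i φ⟫)
    (T : Fin 7 → Fin 7 → Fin 7 → ℝ)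
    (hT : T = fun i j k =>
      -(trip 4 5 6 i j k - trip 0 2 4 i j k + trip 2 3 6 i j k + trip 0 3 5 i j k))
    (sigmaT dT Q : Fin 7 → Fin 7 → Fin 7 → Fin 7 → ℝ)
    (hsigma : sigmaT = fun a b c d => (1 / 2) * ∑ i, wedge22 (T i) (T i) a b c d)
    (hdT : dT = fun a b c d => -4 * quad 0 2 5 6 a b c d)
    (hQ : Q = fun a b c d => (1 / 4) * dT a b c d + (1 / 2) * sigmaT a b c d)
    (A : Δ → Δ)
    (hA : ∀ ψ, A ψ = (1 / 24 : ℝ) •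
      ∑ i, ∑ j, ∑ k, ∑ l, Q i j k l • c i (c j (c k (c l ψ)))) :
    (∀ a b c d, sigmaT a b c d
        = 2 * (quad 2 3 4 5 a b c d - quad 0 3 4 6 a b c d - quad 0 2 5 6 a b c d))
    ∧ (∀ ψ φ : Δ, ⟪A ψ, φ⟫ = ⟪ψ, A φ⟫)
    ∧ ∃ b : OrthonormalBasis (Fin 8) ℝ Δ,
        ∀ m, A (b m) = (![2, -4, 2, 0, 2, 0, 2, -4] : Fin 8 → ℝ) m • b m := by
  have hσ : ∀ a b d e, sigmaT a b d e
      = 2 * (quad 2 3 4 5 a b d e - quad 0 3 4 6 a b d e - quad 0 2 5 6 a b d e) := by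
    subst hT hsigma
    exact half_sum_wedge22_torsion
  have hQσ : ∀ i j k l, Q i j k l
      = quad 2 3 4 5 i j k l - quad 0 3 4 6 i j k l - 2 * quad 0 2 5 6 i j k l := fun i j k l => by
    simp only [hQ, hdT, hσ]
    ring
  have hAc : ∀ ψ, A ψ = spinOperator c ψ := fun ψ =>
    (hA ψ).trans (IsCliffordAction.smul_sum_smul_apply_eq_spinOperator hcl Q hQσ ψ)
  obtain ⟨b, hb⟩ := IsCliffordAction.exists_orthonormalBasis_spinOperator_apply_eq hcl hsk hdim
  refine ⟨hσ, fun ψ φ => ?_, b, fun m => (hAc _).trans (hb m)⟩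
  rw [hAc, hAc]
  exact IsCliffordAction.isSymmetric_spinOperator hcl hsk ψ φ
end
end

section
/- Let (M^{2n}, g, J) be an almost hermitian manifold admitting a metric connection ∇ with totally skew-symmetric torsion 3-form T such that ∇J = 0. Then the Nijenhuis tensor N(X,Y,Z) := g(N(X,Y),Z) is totally skew-symmetric, and in fact T(JX,JY,Z) − T(X,Y,Z) + T(JX,Y,JZ) + T(X,JY,JZ) = −N(X,Y,Z). -/
/- We work in the standard algebraic model of a Riemannian manifold: `R` is the
commutative ℝ-algebra of (smooth) functions, `Γ` the module of vector fields (with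
Lie bracket `bracket`), `g` the metric, `nablag` the Levi-Civita connection and `J`
an almost complex structure compatible with `g`.  `N` denotes the Nijenhuis tensor
`N(X,Y) = [JX,JY] + J²[X,Y] − J[JX,Y] − J[X,JY]`. -/

/-- Let `(M^{2n},g,J)` be an almost hermitian manifold admitting a
metric connection `∇` with totally skew-symmetric torsion 3-form `T` such that
`∇J = 0`.  Then the Nijenhuis tensor `N(X,Y,Z) = g(N(X,Y),Z)` is totally
skew-symmetric, and
`T(JX,JY,Z) − T(X,Y,Z) + T(JX,Y,JZ) + T(X,JY,JZ) = −N(X,Y,Z)`. -/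
theorem stmt_14 {R : Type*} [CommRing R] [Algebra ℝ R]
    {Γ : Type*} [AddCommGroup Γ] [Module R Γ]
    (bracket : Γ → Γ → Γ) (g : Γ → Γ → R)
    (hgsymm : ∀ X Y, g X Y = g Y X)
    (hgadd : ∀ X Y Z : Γ, g (X + Y) Z = g X Z + g Y Z)
    -- the almost complex structure, compatible with `g`
    (J : Γ → Γ)
    (hJadd : ∀ X Y, J (X + Y) = J X + J Y)
    (hJ2 : ∀ X, J (J X) = - X)
    (hJg : ∀ X Y, g (J X) (J Y) = g X Y)
    -- the Levi-Civita connection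
    (nablag : Γ → Γ → Γ)
    (htorsionfree : ∀ X Y, nablag X Y - nablag Y X = bracket X Y)
    -- the metric connection with totally skew-symmetric torsion `T`
    (T : Γ → Γ → Γ → R)
    (hT1 : ∀ X Y Z, T X Y Z = - T Y X Z)
    (hT2 : ∀ X Y Z, T X Y Z = - T X Z Y)
    (nabla : Γ → Γ → Γ)
    (hnabla : ∀ X Y Z, g (nabla X Y) Z
      = g (nablag X Y) Z + algebraMap ℝ R (1 / 2) * T X Y Z)
    -- `∇ J = 0`
    (hJpar : ∀ X Y, nabla X (J Y) = J (nabla X Y))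
    -- the Nijenhuis tensor
    (N : Γ → Γ → Γ)
    (hN : ∀ X Y, N X Y = bracket (J X) (J Y) + J (J (bracket X Y))
      - J (bracket (J X) Y) - J (bracket X (J Y))) :
    -- `N(X,Y,Z) := g(N(X,Y),Z)` is totally skew-symmetric …
    (∀ X Y Z, g (N X Y) Z = - g (N Y X) Z)
    ∧ (∀ X Y Z, g (N X Y) Z = - g (N X Z) Y)
    -- … and the torsion satisfies the stated identity
    ∧ (∀ X Y Z, T (J X) (J Y) Z - T X Y Z + T (J X) Y (J Z) + T X (J Y) (J Z)
        = - g (N X Y) Z) := by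
  -- basic consequences of additivity
  have g0 : ∀ Z : Γ, g 0 Z = 0 := by
    intro Z
    have h := hgadd 0 0 Z
    rw [add_zero] at h
    linear_combination -h
  have gneg : ∀ X Z : Γ, g (-X) Z = - g X Z := by
    intro X Z
    have h := hgadd X (-X) Z
    rw [add_neg_cancel, g0] at h
    linear_combination -h
  have gsub : ∀ X Y Z : Γ, g (X - Y) Z = g X Z - g Y Z := by
    intro X Y Z
    rw [sub_eq_add_neg, hgadd, gneg]
    ring
  have gneg2 : ∀ X Y : Γ, g X (-Y) = - g X Y := by
    intro X Y
    rw [hgsymm, gneg, hgsymm]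
  have gJ : ∀ X Y, g (J X) Y = - g X (J Y) := by
    intro X Y
    have h := hJg X (J Y)
    rw [hJ2, gneg2] at h
    linear_combination -h
  have hc : algebraMap ℝ R (1 / 2) + algebraMap ℝ R (1 / 2) = 1 := by
    rw [← map_add]
    norm_num
  have gbracket : ∀ X Y Z, g (bracket X Y) Z
      = g (nabla X Y) Z - g (nabla Y X) Z - T X Y Z := by
    intro X Y Z
    have hb : g (bracket X Y) Z = g (nablag X Y) Z - g (nablag Y X) Z := by
      rw [← htorsionfree, gsub]
    have h1 := hnabla X Y Z
    have h2 := hnabla Y X Z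
    have hT := hT1 Y X Z
    linear_combination hb - h1 + h2 + algebraMap ℝ R (1 / 2) * hT - T X Y Z * hc
  have key : ∀ X Y Z, g (N X Y) Z
      = T X Y Z - T (J X) (J Y) Z - T (J X) Y (J Z) - T X (J Y) (J Z) := by
    intro X Y Z
    rw [hN, hJ2, gsub, gsub, hgadd, gneg, gJ, gJ,
      gbracket (J X) (J Y) Z, gbracket X Y Z,
      gbracket (J X) Y (J Z), gbracket X (J Y) (J Z),
      hJpar (J X) Y, hJpar (J Y) X, hJpar X Y, hJpar Y X,
      gJ (nabla (J X) Y) Z, gJ (nabla (J Y) X) Z,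
      hJg (nabla X Y) Z, hJg (nabla Y X) Z]
    ring
  refine ⟨?_, ?_, ?_⟩
  · intro X Y Z
    rw [key X Y Z, key Y X Z]
    linear_combination hT1 X Y Z - hT1 (J X) (J Y) Z - hT1 X (J Y) (J Z)
      - hT1 (J X) Y (J Z)
  · intro X Y Z
    rw [key X Y Z, key X Z Y]
    linear_combination hT2 X Y Z - hT2 (J X) (J Y) Z - hT2 (J X) Y (J Z)
      - hT2 X (J Y) (J Z)
  · intro X Y Z
    rw [key X Y Z]
    ring
end
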